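/- For every pattern τ ∈ S_j with first entry 1 and every m ≥ 1, the number of m-cycles in S_m with no cycle τ-match equals the number of permutations π = π_1…π_m ∈ S_m with π_1 = 1 having no τ-match. That is, L_m^{ncm}(τ) = |{π ∈ S_m : π_1 = 1 and π has no τ-match}|. -/

import Mathlib

/-- `l` is the word of a cycle of `σ`, written with its smallest element first:
`l` is nonempty, has no repeats, starts with its minimum, consecutive entries are
obtained by applying `σ`, and `σ` maps the last entry back to the first. -/
def IsCycleWord {n : ℕ} (σ : Equiv.Perm (Fin n)) (l : List (Fin n)) : Prop :=
  ∃ h : l ≠ [], l.Nodup ∧ (∀ x ∈ l, l.head h ≤ x) ∧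
    l.Chain' (fun x y => y = σ x) ∧ σ (l.getLast h) = l.head h

/-- `σ` has a cycle `τ`-match: some cycle of `σ` of length at least `j`, written
smallest element first, has `j` cyclically consecutive entries order-isomorphic
to the word of `τ` (indices taken modulo the cycle length). -/
def HasCycleMatch {n j : ℕ} (σ : Equiv.Perm (Fin n)) (τ : Equiv.Perm (Fin j)) : Prop :=
  ∃ l : List (Fin n), IsCycleWord σ l ∧
    ∃ (hl : l ≠ []) (_ : j ≤ l.length) (r : ℕ),
      ∀ s t : Fin j,
        (l.get ⟨(r + (s : ℕ)) % l.length, Nat.mod_lt _ (List.length_pos_iff.mpr hl)⟩ <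
         l.get ⟨(r + (t : ℕ)) % l.length, Nat.mod_lt _ (List.length_pos_iff.mpr hl)⟩ ↔
          τ s < τ t)

/-- `σ` has a cycle occurrence of `τ`: some cycle of `σ` of length `p ≥ j`, written
smallest element first, admits a start `r` and offsets `0 = i₀ < i₁ < ⋯ < i_{j-1} ≤ p-1`
whose entries (indices modulo `p`) are order-isomorphic to the word of `τ`. -/
def HasCycleOcc {n j : ℕ} (σ : Equiv.Perm (Fin n)) (τ : Equiv.Perm (Fin j)) : Prop :=
  ∃ l : List (Fin n), IsCycleWord σ l ∧
    ∃ (hl : l ≠ []) (_ : j ≤ l.length) (r : ℕ) (f : Fin j → ℕ),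
      StrictMono f ∧ (∀ s : Fin j, (s : ℕ) = 0 → f s = 0) ∧
      (∀ s : Fin j, f s ≤ l.length - 1) ∧
      ∀ s t : Fin j,
        (l.get ⟨(r + f s) % l.length, Nat.mod_lt _ (List.length_pos_iff.mpr hl)⟩ <
         l.get ⟨(r + f t) % l.length, Nat.mod_lt _ (List.length_pos_iff.mpr hl)⟩ ↔
          τ s < τ t)

/-- `w` (with cycle list `L`) is the word `σ̄` obtained from `σ` by writing each cycle
with smallest element first, arranging the cycles by decreasing smallest elements,
and concatenating. -/
def IsBar {n : ℕ} (σ : Equiv.Perm (Fin n)) (L : List (List (Fin n))) (w : List (Fin n)) : Prop :=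
  w = L.flatten ∧ (∀ l ∈ L, IsCycleWord σ l) ∧
    L.Chain' (fun l₁ l₂ => ∃ (h₁ : l₁ ≠ []) (h₂ : l₂ ≠ []), l₂.head h₂ < l₁.head h₁) ∧
    ∀ x : Fin n, x ∈ w

/-- The word `w` has a `τ`-match starting at some position `i`:
`w_i … w_{i+j-1}` is order-isomorphic to the word of `τ`. -/
def HasWordMatch {n j : ℕ} (w : List (Fin n)) (τ : Equiv.Perm (Fin j)) : Prop :=
  ∃ (i : ℕ) (h : i + j ≤ w.length),
    ∀ s t : Fin j,
      (w.get ⟨i + (s : ℕ), by have := s.isLt; omega⟩ <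
       w.get ⟨i + (t : ℕ), by have := t.isLt; omega⟩ ↔ τ s < τ t)

/-- The permutation `σ`, in one-line notation, has a `τ`-match. -/
def HasLinMatch {n j : ℕ} (σ : Equiv.Perm (Fin n)) (τ : Equiv.Perm (Fin j)) : Prop :=
  ∃ (i : ℕ) (h : i + j ≤ n),
    ∀ s t : Fin j,
      (σ ⟨i + (s : ℕ), by have := s.isLt; omega⟩ <
       σ ⟨i + (t : ℕ), by have := t.isLt; omega⟩ ↔ τ s < τ t)

/-- The number of descents of a word. -/
def desList {α : Type*} [LinearOrder α] : List α → ℕ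
  | a :: b :: t => (if b < a then 1 else 0) + desList (b :: t)
  | _ => 0

/-- The number of left-to-right minima of a word. -/
def lrmCount {α : Type*} [LinearOrder α] (w : List α) : ℕ :=
  (Finset.univ.filter (fun j : Fin w.length =>
    ∀ i : Fin w.length, i < j → w.get j < w.get i)).card

/-- The number of descents of a permutation in one-line notation. -/
noncomputable def desPerm {n : ℕ} (σ : Equiv.Perm (Fin n)) : ℕ :=
  Nat.card {i : Fin n // ∃ h : (i : ℕ) + 1 < n, σ ⟨(i : ℕ) + 1, h⟩ < σ i}

/-- A cycle `τ`-match in the cyclic word of an `m`-cycle, represented (0-based) by a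
permutation `c` of `Fin m` with `c 0 = 0` giving the cycle word `c 0, …, c (m-1)`:
some `j` cyclically consecutive entries are order-isomorphic to the word of `τ`. -/
def HasCyclicWordMatch {m j : ℕ} (hm : 0 < m) (c : Equiv.Perm (Fin m))
    (τ : Equiv.Perm (Fin j)) : Prop :=
  j ≤ m ∧ ∃ r : ℕ,
    ∀ s t : Fin j,
      (c ⟨(r + (s : ℕ)) % m, Nat.mod_lt _ hm⟩ < c ⟨(r + (t : ℕ)) % m, Nat.mod_lt _ hm⟩ ↔
        τ s < τ t)

theorem key_iff {j m : ℕ} (hj : 0 < j) (τ : Equiv.Perm (Fin j)) (hτ : τ ⟨0, hj⟩ = ⟨0, hj⟩)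
    (hm : 0 < m) (c : Equiv.Perm (Fin m)) (hc : c ⟨0, hm⟩ = ⟨0, hm⟩) :
    HasCyclicWordMatch hm c τ ↔ HasLinMatch c τ := by
  constructor
  · rintro ⟨hjm, r, hiso⟩
    have hr'm : r % m < m := Nat.mod_lt _ hm
    have hmod : ∀ s : ℕ, (r + s) % m = (r % m + s) % m := by
      intro s; rw [Nat.mod_add_mod]
    by_cases hcase : r % m + j ≤ m
    · refine ⟨r % m, hcase, fun s t => ?_⟩
      have hs : ∀ u : Fin j, (r + (u : ℕ)) % m = r % m + (u : ℕ) := by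
        intro u
        rw [hmod]; exact Nat.mod_eq_of_lt (by have := u.isLt; omega)
      have := hiso s t
      have es : (⟨(r + (s : ℕ)) % m, Nat.mod_lt _ hm⟩ : Fin m)
          = ⟨r % m + (s : ℕ), by have := s.isLt; omega⟩ := Fin.ext (hs s)
      have et : (⟨(r + (t : ℕ)) % m, Nat.mod_lt _ hm⟩ : Fin m)
          = ⟨r % m + (t : ℕ), by have := t.isLt; omega⟩ := Fin.ext (hs t)
      rwa [es, et] at this
    · exfalso
      have hr0 : 0 < r % m := by
        by_contra h
        have : r % m = 0 := by omega
        omega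
      set s₀ : Fin j := ⟨m - r % m, by omega⟩ with hs₀
      have hval0 : (r + (s₀ : ℕ)) % m = 0 := by
        rw [hmod]
        simp [hs₀, show r % m + (m - r % m) = m by omega]
      have hvalr : (r + ((⟨0, hj⟩ : Fin j) : ℕ)) % m = r % m := by
        rw [hmod]; simp [Nat.mod_eq_of_lt hr'm]
      have e0 : (⟨(r + (s₀ : ℕ)) % m, Nat.mod_lt _ hm⟩ : Fin m) = ⟨0, hm⟩ := Fin.ext hval0
      have er : (⟨(r + ((⟨0, hj⟩ : Fin j) : ℕ)) % m, Nat.mod_lt _ hm⟩ : Fin m)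
          = ⟨r % m, hr'm⟩ := Fin.ext hvalr
      have h2 := hiso s₀ ⟨0, hj⟩
      rw [e0, er, hc] at h2
      have hne : c ⟨r % m, hr'm⟩ ≠ ⟨0, hm⟩ := by
        rw [← hc]
        intro h
        have := c.injective h
        have := Fin.val_eq_of_eq this
        simp at this
        omega
      have hlt : (⟨0, hm⟩ : Fin m) < c ⟨r % m, hr'm⟩ := by
        rcases Nat.eq_zero_or_pos ((c ⟨r % m, hr'm⟩ : Fin m) : ℕ) with h | h
        · exact absurd (Fin.ext h) hne
        · exact h
      have := h2.mp hlt
      rw [hτ] at this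
      exact absurd this (by simp [Fin.lt_def])
  · rintro ⟨i, h, hiso⟩
    refine ⟨by omega, i, fun s t => ?_⟩
    have hs : ∀ u : Fin j, (i + (u : ℕ)) % m = i + (u : ℕ) := by
      intro u; exact Nat.mod_eq_of_lt (by have := u.isLt; omega)
    have es : (⟨(i + (s : ℕ)) % m, Nat.mod_lt _ hm⟩ : Fin m)
        = ⟨i + (s : ℕ), by have := s.isLt; omega⟩ := Fin.ext (hs s)
    have et : (⟨(i + (t : ℕ)) % m, Nat.mod_lt _ hm⟩ : Fin m)
        = ⟨i + (t : ℕ), by have := t.isLt; omega⟩ := Fin.ext (hs t)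
    rw [es, et]
    exact hiso s t

/-- If `τ ∈ S_j` starts with `1` (0-based: `τ 0 = 0`) and `m ≥ 1`, then the number of
`m`-cycles in `S_m` with no cycle `τ`-match equals the number of permutations
`π ∈ S_m` with `π 1 = 1` (0-based: `π 0 = 0`) having no `τ`-match:
`L_m^{ncm}(τ) = |{π ∈ S_m : π₁ = 1, no τ-match}|`. -/
theorem stmt7 {j : ℕ} (hj : 0 < j) (τ : Equiv.Perm (Fin j)) (hτ : τ ⟨0, hj⟩ = ⟨0, hj⟩)
    (m : ℕ) (hm : 0 < m) :
    Nat.card {c : Equiv.Perm (Fin m) // c ⟨0, hm⟩ = ⟨0, hm⟩ ∧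
        ¬ HasCyclicWordMatch hm c τ} =
      Nat.card {π : Equiv.Perm (Fin m) // π ⟨0, hm⟩ = ⟨0, hm⟩ ∧ ¬ HasLinMatch π τ} := by
  apply Nat.card_congr
  apply Equiv.subtypeEquivRight
  intro c
  constructor
  · rintro ⟨h0, hn⟩
    exact ⟨h0, fun hl => hn ((key_iff hj τ hτ hm c h0).mpr hl)⟩
  · rintro ⟨h0, hn⟩
    exact ⟨h0, fun hl => hn ((key_iff hj τ hτ hm c h0).mp hl)⟩
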